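/- (Adaptive FSAI update) Let A be s.p.d. with block structure, F the FSAI matrix for pattern 𝒫, k a block row, and c ∉ 𝒫_k with c < k. Let F^{(c)} be the FSAI matrix for the pattern 𝒫 ∪ {(k,c)} and W_c := A_{cc} − A[{c},𝒫̃_k] A[𝒫̃_k,𝒫̃_k]⁻¹ A[𝒫̃_k,{c}]. Then (F^{(c)} A F^{(c)ᵀ})_{kk} = (F A Fᵀ)_{kk} − (FA)_{kc} W_c⁻¹ (FA)_{kc}ᵀ. -/

import Mathlib

open Matrix

/-- Scalar index type for a block structure with `n` blocks of sizes `m i`. -/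
abbrev BIdx {n : ℕ} (m : Fin n → ℕ) := (i : Fin n) × Fin (m i)

/-- The `(i,j)` block of a block-structured matrix. -/
def blk {n : ℕ} {m : Fin n → ℕ} (A : Matrix (BIdx m) (BIdx m) ℝ) (i j : Fin n) :
    Matrix (Fin (m i)) (Fin (m j)) ℝ :=
  fun a b => A ⟨i, a⟩ ⟨j, b⟩

/-- The block-diagonal part `diag_𝔅(A)` of a block-structured matrix. -/
def bdiag {n : ℕ} {m : Fin n → ℕ} (A : Matrix (BIdx m) (BIdx m) ℝ) :
    Matrix (BIdx m) (BIdx m) ℝ :=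
  fun p q => if p.1 = q.1 then A p q else 0

/-- The block submatrix `A[S, T]` with block-row indices in `S` and block-column indices in `T`. -/
def subM {n : ℕ} {m : Fin n → ℕ} (A : Matrix (BIdx m) (BIdx m) ℝ) (S T : Finset (Fin n)) :
    Matrix {p : BIdx m // p.1 ∈ S} {q : BIdx m // q.1 ∈ T} ℝ :=
  fun p q => A p.val q.val

/-- The block row submatrix `A[{i}, T]`. -/
def rowM {n : ℕ} {m : Fin n → ℕ} (A : Matrix (BIdx m) (BIdx m) ℝ) (i : Fin n)
    (T : Finset (Fin n)) : Matrix (Fin (m i)) {q : BIdx m // q.1 ∈ T} ℝ :=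
  fun a q => A ⟨i, a⟩ q.val

/-- The block column submatrix `A[S, {i}]`. -/
def colM {n : ℕ} {m : Fin n → ℕ} (A : Matrix (BIdx m) (BIdx m) ℝ) (S : Finset (Fin n))
    (i : Fin n) : Matrix {p : BIdx m // p.1 ∈ S} (Fin (m i)) ℝ :=
  fun p a => A p.val ⟨i, a⟩

/-- A block sparsity pattern, given by its rows `P i ⊆ {1,…,n}`, is lower triangular and
contains the diagonal. -/
def IsLowerPattern {n : ℕ} (P : Fin n → Finset (Fin n)) : Prop :=
  (∀ i, i ∈ P i) ∧ ∀ i j, j ∈ P i → j ≤ i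

/-- `F` is the block-FSAI matrix for `A` based on the pattern `P`: identity diagonal blocks,
zero blocks outside the pattern, and `F[{i}, 𝒫̃ᵢ] = -A[{i}, 𝒫̃ᵢ] A[𝒫̃ᵢ, 𝒫̃ᵢ]⁻¹`
where `𝒫̃ᵢ = Pᵢ \ {i}`. -/
def IsFSAI {n : ℕ} {m : Fin n → ℕ} (A F : Matrix (BIdx m) (BIdx m) ℝ)
    (P : Fin n → Finset (Fin n)) : Prop :=
  (∀ i, blk F i i = 1) ∧
  (∀ p q : BIdx m, p.1 ≠ q.1 → q.1 ∉ P p.1 → F p q = 0) ∧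
  (∀ i, rowM F i ((P i).erase i) =
    -(rowM A i ((P i).erase i)) * (subM A ((P i).erase i) ((P i).erase i))⁻¹)

/-- `S` is the block-diagonal FSAI Schur-complement matrix:
`S_{ii} = A_{ii} - A[{i}, 𝒫̃ᵢ] A[𝒫̃ᵢ, 𝒫̃ᵢ]⁻¹ A[𝒫̃ᵢ, {i}]`. -/
def IsFSAISchur {n : ℕ} {m : Fin n → ℕ} (A S : Matrix (BIdx m) (BIdx m) ℝ)
    (P : Fin n → Finset (Fin n)) : Prop :=
  (∀ p q : BIdx m, p.1 ≠ q.1 → S p q = 0) ∧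
  (∀ i, blk S i i =
    blk A i i - rowM A i ((P i).erase i) * (subM A ((P i).erase i) ((P i).erase i))⁻¹ *
      colM A ((P i).erase i) i)

/-!
Row `k` of an FSAI matrix `F` is the identity on block `k` and `-A[{k},T] A[T,T]⁻¹` on
`T = 𝒫̃ₖ`, so `(FA)_{kj}` is the `(k,j)` block of the Schur complement `A / A[T,T]`, and
`(FA)[{k},T] = 0`, whence `(F A Fᵀ)_{kk} = (FA)_{kk}`. Adding `c` to the pattern replaces `T` by
`T ∪ {c}`, and by the quotient formula for Schur complements this subtracts
`(A/A[T,T])_{kc} W_c⁻¹ (A/A[T,T])_{ck}` from the `(k,k)` block, where `W_c = (A/A[T,T])_{cc}`.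
-/

theorem Matrix.fromCols_mul_inv_fromBlocks_mul_fromRows {α ι κ μ ν : Type*} [CommRing α]
    [Fintype μ] [DecidableEq μ] [Fintype ν] [DecidableEq ν]
    {M : Matrix μ μ α} {B : Matrix μ ν α} {C : Matrix ν μ α} {D : Matrix ν ν α}
    (hM : IsUnit M) (hMBCD : IsUnit (fromBlocks M B C D))
    (x : Matrix ι μ α) (y : Matrix ι ν α) (z : Matrix μ κ α) (w : Matrix ν κ α) :
    fromCols x y * (fromBlocks M B C D)⁻¹ * fromRows z w =
      x * M⁻¹ * z + (y - x * M⁻¹ * B) * (D - C * M⁻¹ * B)⁻¹ * (w - C * M⁻¹ * z) := by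
  let := hM.invertible
  let := hMBCD.invertible
  let := invertibleOfFromBlocks₁₁Invertible M B C D
  simp only [← invOf_eq_nonsing_inv, invOf_fromBlocks₁₁_eq, fromCols_mul_fromBlocks,
    fromCols_mul_fromRows, Matrix.mul_add, Matrix.add_mul, Matrix.mul_sub, Matrix.sub_mul,
    Matrix.mul_neg, Matrix.neg_mul, ← Matrix.mul_assoc]
  abel

section BlockMatrix

variable {n : ℕ} {m : Fin n → ℕ}

/-- The `(i, j)` block of the Schur complement of `A[T,T]` in `A`; the paper's `W_c` is
`schurBlock A 𝒫̃ₖ c c`. -/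
noncomputable def schurBlock (A : Matrix (BIdx m) (BIdx m) ℝ) (T : Finset (Fin n)) (i j : Fin n) :
    Matrix (Fin (m i)) (Fin (m j)) ℝ :=
  blk A i j - rowM A i T * (subM A T T)⁻¹ * colM A T j

theorem schurBlock_transpose (A : Matrix (BIdx m) (BIdx m) ℝ) (T : Finset (Fin n))
    (i j : Fin n) : (schurBlock A T i j)ᵀ = schurBlock Aᵀ T j i := by
  simp only [schurBlock, transpose_sub, transpose_mul, transpose_nonsing_inv, Matrix.mul_assoc]
  rfl

theorem Matrix.PosDef.isUnit_subM {A : Matrix (BIdx m) (BIdx m) ℝ} (hA : A.PosDef)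
    (T : Finset (Fin n)) : IsUnit (subM A T T) :=
  (hA.submatrix Subtype.val_injective).isUnit

def sumBlockEquivInsert (T : Finset (Fin n)) {c : Fin n} (hc : c ∉ T) :
    ({p : BIdx m // p.1 ∈ T} ⊕ Fin (m c)) ≃ {p : BIdx m // p.1 ∈ insert c T} where
  toFun := Sum.elim (fun p => ⟨p.1, Finset.mem_insert_of_mem p.2⟩)
    (fun x => ⟨⟨c, x⟩, Finset.mem_insert_self c T⟩)
  invFun q := if h : q.1.1 ∈ T then Sum.inl ⟨q.1, h⟩ else
    Sum.inr (Fin.cast (congrArg m ((Finset.mem_insert.mp q.2).resolve_right h)) q.1.2)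
  left_inv := by
    rintro (⟨p, hp⟩ | x)
    · simp [hp]
    · simp [hc]
  right_inv := by
    rintro ⟨⟨i, b⟩, hq⟩
    by_cases h : i ∈ T
    · simp [h]
    · obtain rfl : i = c := (Finset.mem_insert.mp hq).resolve_right h
      simp [h]

/-- The Crabtree–Haynsworth quotient formula `A / A[T ∪ {c}] = (A / A[T]) / W_c`. -/
theorem schurBlock_insert {A : Matrix (BIdx m) (BIdx m) ℝ} {T : Finset (Fin n)} {c : Fin n}
    (hc : c ∉ T) (hT : IsUnit (subM A T T)) (hcT : IsUnit (subM A (insert c T) (insert c T)))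
    (i j : Fin n) :
    schurBlock A (insert c T) i j =
      schurBlock A T i j - schurBlock A T i c * (schurBlock A T c c)⁻¹ * schurBlock A T c j := by
  let e := sumBlockEquivInsert (m := m) T hc
  have hsub : (subM A (insert c T) (insert c T)).submatrix e e =
      fromBlocks (subM A T T) (colM A T c) (rowM A c T) (blk A c c) := by
    ext (s | s) (t | t) <;> rfl
  have hrow : (rowM A i (insert c T)).submatrix id e = fromCols (rowM A i T) (blk A i c) := by
    ext a (s | s) <;> rfl
  have hcol : (colM A (insert c T) j).submatrix e id = fromRows (colM A T j) (blk A c j) := by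
    ext (s | s) b <;> rfl
  have hblocks : IsUnit (fromBlocks (subM A T T) (colM A T c) (rowM A c T) (blk A c c)) :=
    hsub ▸ (isUnit_submatrix_equiv e e).mpr hcT
  have hquad : rowM A i (insert c T) * (subM A (insert c T) (insert c T))⁻¹ *
      colM A (insert c T) j = fromCols (rowM A i T) (blk A i c) *
        (fromBlocks (subM A T T) (colM A T c) (rowM A c T) (blk A c c))⁻¹ *
        fromRows (colM A T j) (blk A c j) := by
    rw [← hrow, ← hsub, ← hcol, inv_submatrix_equiv, submatrix_mul_equiv,
      submatrix_mul_equiv, submatrix_id_id]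
  rw [schurBlock, hquad, fromCols_mul_inv_fromBlocks_mul_fromRows hT hblocks]
  simp only [schurBlock]
  abel

end BlockMatrix

namespace IsFSAI

variable {n : ℕ} {m : Fin n → ℕ} {A F : Matrix (BIdx m) (BIdx m) ℝ} {P : Fin n → Finset (Fin n)}

theorem sum_mul (hF : IsFSAI A F P) (k : Fin n) (a : Fin (m k)) (g : BIdx m → ℝ) :
    ∑ q, F ⟨k, a⟩ q * g q =
      g ⟨k, a⟩ + ∑ p : {p : BIdx m // p.1 ∈ (P k).erase k}, F ⟨k, a⟩ p * g p := by
  classical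
  have hdiag : ∀ q : BIdx m, q.1 = k → F ⟨k, a⟩ q * g q = if ⟨k, a⟩ = q then g q else 0 := by
    rintro ⟨i, b⟩ rfl
    have hab := congrFun (congrFun (hF.1 i) a) b
    simp only [blk, one_apply] at hab
    by_cases h : a = b <;> simp_all
  have hoff : ∀ q : BIdx m, q.1 ≠ k → q.1 ∉ (P k).erase k → F ⟨k, a⟩ q * g q = 0 :=
    fun q hqk hq => by
      rw [hF.2.1 ⟨k, a⟩ q (Ne.symm hqk) fun h => hq (Finset.mem_erase.2 ⟨hqk, h⟩), zero_mul]
  rw [← Finset.sum_filter_add_sum_filter_not Finset.univ (fun q : BIdx m => q.1 = k),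
    Finset.sum_congr rfl fun q hq => hdiag q (Finset.mem_filter.1 hq).2, Finset.sum_ite_eq,
    if_pos (by simp), ← Finset.sum_subtype (Finset.univ.filter (·.1 ∈ (P k).erase k))
    (by simp) fun q => F ⟨k, a⟩ q * g q]
  refine congrArg _ (Finset.sum_subset (fun q hq => ?_) fun q hq hq' => hoff q ?_ ?_).symm <;>
    simp_all

theorem blk_mul (hF : IsFSAI A F P) (X : Matrix (BIdx m) (BIdx m) ℝ) (k j : Fin n) :
    blk (F * X) k j = blk X k j + rowM F k ((P k).erase k) * colM X ((P k).erase k) j := by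
  ext a b
  exact hF.sum_mul k a fun q => X q ⟨j, b⟩

theorem blk_mul_transpose (hF : IsFSAI A F P) (Y : Matrix (BIdx m) (BIdx m) ℝ) (k : Fin n) :
    blk (Y * Fᵀ) k k = blk Y k k + rowM Y k ((P k).erase k) * (rowM F k ((P k).erase k))ᵀ := by
  ext a b
  have h := hF.sum_mul k b fun q => Y ⟨k, a⟩ q
  simp only [mul_comm (F _ _)] at h
  exact h

theorem rowM_mul_self (hF : IsFSAI A F P) (k : Fin n)
    (hT : IsUnit (subM A ((P k).erase k) ((P k).erase k))) :
    rowM (F * A) k ((P k).erase k) = 0 := by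
  have hrow : rowM (F * A) k ((P k).erase k) = rowM A k ((P k).erase k) +
      rowM F k ((P k).erase k) * subM A ((P k).erase k) ((P k).erase k) := by
    ext a q
    exact hF.sum_mul k a fun p => A p q
  rw [hrow, hF.2.2 k, Matrix.mul_assoc, nonsing_inv_mul _ ((isUnit_iff_isUnit_det _).1 hT),
    Matrix.mul_one, add_neg_cancel]

theorem blk_mul_self (hF : IsFSAI A F P) (k j : Fin n) :
    blk (F * A) k j = schurBlock A ((P k).erase k) k j := by
  rw [hF.blk_mul, hF.2.2 k, schurBlock, Matrix.neg_mul, Matrix.neg_mul, Matrix.mul_assoc,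
    sub_eq_add_neg]

theorem blk_mul_self_mul_transpose (hF : IsFSAI A F P) (k : Fin n)
    (hT : IsUnit (subM A ((P k).erase k) ((P k).erase k))) :
    blk (F * A * Fᵀ) k k = blk (F * A) k k := by
  rw [hF.blk_mul_transpose, hF.rowM_mul_self k hT, Matrix.zero_mul, add_zero]

end IsFSAI

theorem fsai_adaptive_update_general {n : ℕ} {m : Fin n → ℕ}
    (A F F' : Matrix (BIdx m) (BIdx m) ℝ) (P : Fin n → Finset (Fin n))
    (hA : A.PosDef)
    (k c : Fin n) (hck : c < k) (hcP : c ∉ P k)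
    (hF : IsFSAI A F P)
    (hF' : IsFSAI A F' (Function.update P k (insert c (P k)))) :
    blk (F' * A * F'ᵀ) k k =
      blk (F * A * Fᵀ) k k -
        blk (F * A) k c *
          (blk A c c - rowM A c ((P k).erase k) *
              (subM A ((P k).erase k) ((P k).erase k))⁻¹ * colM A ((P k).erase k) c)⁻¹ *
          (blk (F * A) k c)ᵀ := by
  have hpattern : (Function.update P k (insert c (P k)) k).erase k = insert c ((P k).erase k) := by
    rw [Function.update_self, Finset.erase_insert_of_ne hck.ne]
  have hcT : c ∉ (P k).erase k := fun h => hcP (Finset.mem_of_mem_erase h)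
  have hAT : Aᵀ = A := (isHermitian_iff_isSymm.mp hA.1).eq
  rw [hF'.blk_mul_self_mul_transpose k (hA.isUnit_subM _), hF'.blk_mul_self, hpattern,
    schurBlock_insert hcT (hA.isUnit_subM _) (hA.isUnit_subM _),
    hF.blk_mul_self_mul_transpose k (hA.isUnit_subM _), hF.blk_mul_self, hF.blk_mul_self,
    schurBlock_transpose, hAT]
  rfl

/-- (Adaptive FSAI update) If `F` is the FSAI matrix for the pattern `P` and `F'` the FSAI
matrix for the enlarged pattern `P ∪ {(k,c)}` (with `c < k`, `c ∉ Pₖ`), then writing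
`W_c = A_{cc} - A[{c},𝒫̃ₖ] A[𝒫̃ₖ,𝒫̃ₖ]⁻¹ A[𝒫̃ₖ,{c}]`, one has
`(F' A F'ᵀ)_{kk} = (F A Fᵀ)_{kk} - (FA)_{kc} W_c⁻¹ (FA)_{kc}ᵀ`. -/
theorem fsai_adaptive_update {n : ℕ} {m : Fin n → ℕ}
    (A F F' : Matrix (BIdx m) (BIdx m) ℝ) (P : Fin n → Finset (Fin n))
    (hA : A.PosDef) (hP : IsLowerPattern P)
    (k c : Fin n) (hck : c < k) (hcP : c ∉ P k)
    (hF : IsFSAI A F P)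
    (hF' : IsFSAI A F' (Function.update P k (insert c (P k)))) :
    blk (F' * A * F'ᵀ) k k =
      blk (F * A * Fᵀ) k k -
        blk (F * A) k c *
          (blk A c c - rowM A c ((P k).erase k) *
              (subM A ((P k).erase k) ((P k).erase k))⁻¹ * colM A ((P k).erase k) c)⁻¹ *
          (blk (F * A) k c)ᵀ :=
  fsai_adaptive_update_general A F F' P hA k c hck hcP hF hF'
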